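/- Let p, q be relatively prime positive integers, let S²_{p,q} = S³_{p,q}/S¹ be the orbit space of the S¹-action e^{2πiθ}·(z,w) = (e^{2πipθ}z, e^{2πiqθ}w) with the quotient topology, and let U_S = {[z:w] ∈ S²_{p,q} : w ≠ 0}. The group Γ_{1/q} = {e^{2πik/q} : k ∈ ℤ} acts on B(q) = {z ∈ ℂ : |z|² < q} by complex multiplication, and the map B(q)/Γ_{1/q} → U_S sending the class [z] to the orbit [z : √(p − (p/q)|z|²)] is well defined and is a homeomorphism, where B(q)/Γ_{1/q} carries the quotient topology and U_S the subspace topology. -/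

import Mathlib

open Complex

/-- `expc x = e^{2πix}`. -/
noncomputable def expc (x : ℝ) : ℂ := Complex.exp (2 * Real.pi * Complex.I * x)

/-- The ellipsoid `S³_{p,q} = {(z,w) ∈ ℂ² : p|z|² + q|w|² = pq}`. -/
def ellipsoid (p q : ℕ) : Set (ℂ × ℂ) :=
  {z | (p : ℝ) * ‖z.1‖ ^ 2 + (q : ℝ) * ‖z.2‖ ^ 2 = (p : ℝ) * (q : ℝ)}

/-- Orbit relation of the `S¹`-action `e^{2πiθ}·(z,w) = (e^{2πipθ}z, e^{2πiqθ}w)` on the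
ellipsoid `S³_{p,q}`. -/
noncomputable def orbitRel (p q : ℕ) (x y : ellipsoid p q) : Prop :=
  ∃ θ : ℝ, (y : ℂ × ℂ) =
    (expc ((p : ℝ) * θ) * (x : ℂ × ℂ).1, expc ((q : ℝ) * θ) * (x : ℂ × ℂ).2)

/-- The ball `B(q) = {z ∈ ℂ : |z|² < q}`. -/
def ball' (q : ℕ) : Set ℂ := {z | ‖z‖ ^ 2 < (q : ℝ)}

/-- Orbit relation of the action of `Γ_{1/q} = {e^{2πik/q} : k ∈ ℤ}` on `B(q)` by complex
multiplication. -/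
noncomputable def ballRel (q : ℕ) (x y : ball' q) : Prop :=
  ∃ k : ℤ, (y : ℂ) = expc ((k : ℝ) / (q : ℝ)) * (x : ℂ)

/-- `U_S = {[z:w] ∈ S²_{p,q} : w ≠ 0}`. -/
noncomputable def US (p q : ℕ) : Set (Quot (orbitRel p q)) :=
  {o | ∃ x : ellipsoid p q, Quot.mk (orbitRel p q) x = o ∧ (x : ℂ × ℂ).2 ≠ 0}

/-! The map `z ↦ [z : √(p - (p/q)|z|²)]` is constant on `Γ_{1/q}`-orbits: if `pu + qv = 1`, the
circle element `θ = ku/q` multiplies `z` by `e^{2πik/q}` and fixes `w`. Every orbit with `w ≠ 0`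
meets its image (rotate `w` to `|w|`). The orbit invariant `[z : w] ↦ z^q (w̄/|w|)^p` is continuous
on `U_S` and pulls the chart back to `[z] ↦ z^q`, an open embedding of `B(q)/Γ_{1/q}` into `ℂ`
since `z ↦ z^q` is an open map whose fibres are the `Γ_{1/q}`-orbits. So the chart is a continuous
inducing bijection, i.e. a homeomorphism. -/

open Topology

lemma expc_add (a b : ℝ) : expc (a + b) = expc a * expc b := by
  simp only [expc, ofReal_add, mul_add, Complex.exp_add]

lemma expc_intCast (n : ℤ) : expc n = 1 := by
  rw [expc, ofReal_intCast, mul_comm]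
  exact exp_int_mul_two_pi_mul_I n

lemma norm_expc_mul (x : ℝ) (z : ℂ) : ‖expc x * z‖ = ‖z‖ := by
  rw [norm_mul, expc, show 2 * Real.pi * I * (x : ℂ) = ((2 * Real.pi * x : ℝ) : ℂ) * I by
    push_cast; ring, norm_exp_ofReal_mul_I, one_mul]

lemma expc_pow (x : ℝ) (n : ℕ) : expc x ^ n = expc (n * x) := by
  rw [expc, ← Complex.exp_nat_mul, expc]
  push_cast
  ring_nf

lemma conj_expc (x : ℝ) : starRingEnd ℂ (expc x) = expc (-x) := by
  rw [expc, ← exp_conj, expc]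
  simp only [map_mul, conj_ofReal, conj_I, map_ofNat, ofReal_neg]
  ring_nf

lemma expc_div_pow_self {n : ℕ} (hn : n ≠ 0) (k : ℤ) : expc (k / n) ^ n = 1 := by
  rw [expc_pow, mul_div_cancel₀ _ (Nat.cast_ne_zero.2 hn), expc_intCast]

lemma expc_neg_arg_mul_self (w : ℂ) : expc (-(arg w / (2 * Real.pi))) * w = ‖w‖ := by
  conv_lhs => arg 2; rw [← norm_mul_exp_arg_mul_I w]
  rw [expc, mul_left_comm, ← Complex.exp_add]
  have hπ : (Real.pi : ℂ) ≠ 0 := ofReal_ne_zero.2 Real.pi_ne_zero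
  have : 2 * Real.pi * I * ((-(arg w / (2 * Real.pi)) : ℝ) : ℂ) + arg w * I = 0 := by
    push_cast
    field_simp
    ring
  rw [this, Complex.exp_zero, mul_one]

lemma exists_expc_mul_of_pow_eq_pow {n : ℕ} (hn : n ≠ 0) {y z : ℂ} (h : z ^ n = y ^ n) :
    ∃ k : ℤ, z = expc (k / n) * y := by
  rcases eq_or_ne y 0 with rfl | hy
  · exact ⟨0, by rwa [zero_pow hn, pow_eq_zero_iff hn, ← mul_zero (expc _)] at h⟩
  have : NeZero n := ⟨hn⟩
  obtain ⟨i, -, hi⟩ := (isPrimitiveRoot_exp n hn).eq_pow_of_pow_eq_one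
    (show (z / y) ^ n = 1 by rw [div_pow, h, div_self (pow_ne_zero n hy)])
  refine ⟨i, ?_⟩
  have hnC : (n : ℂ) ≠ 0 := Nat.cast_ne_zero.2 hn
  rw [show expc ((i : ℤ) / n) = exp (2 * Real.pi * I / n) ^ i by
    rw [expc, ← Complex.exp_nat_mul]; push_cast; field_simp, hi, div_mul_cancel₀ z hy]

lemma expc_mul_mem_ball'_iff {q : ℕ} (x : ℝ) (z : ℂ) : expc x * z ∈ ball' q ↔ z ∈ ball' q := by
  simp only [ball', Set.mem_ofPred_eq, norm_expc_mul]

lemma ne_zero_of_mem_ball' {q : ℕ} {z : ℂ} (hz : z ∈ ball' q) : q ≠ 0 := by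
  rintro rfl
  exact (pow_nonneg (norm_nonneg z) 2).not_gt (by simpa [ball'] using hz)

lemma isOpen_ball' (q : ℕ) : IsOpen (ball' q) :=
  isOpen_lt (continuous_norm.pow 2) continuous_const

lemma mem_ellipsoid_iff {p q : ℕ} (hq : q ≠ 0) {x : ℂ × ℂ} :
    x ∈ ellipsoid p q ↔ ‖x.2‖ ^ 2 = p - p / q * ‖x.1‖ ^ 2 := by
  have hqR : (q : ℝ) ≠ 0 := Nat.cast_ne_zero.2 hq
  change _ = _ ↔ _
  field_simp
  constructor <;> intro h <;> linarith

lemma sub_div_mul_norm_sq_pos {p q : ℕ} (hp : 0 < p) {z : ℂ} (hz : z ∈ ball' q) :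
    0 < (p : ℝ) - p / q * ‖z‖ ^ 2 := by
  have hq : (0 : ℝ) < q := Nat.cast_pos.2 (Nat.pos_of_ne_zero (ne_zero_of_mem_ball' hz))
  have : (p : ℝ) / q * ‖z‖ ^ 2 < p / q * q := mul_lt_mul_of_pos_left hz (by positivity)
  rw [div_mul_cancel₀ _ hq.ne'] at this
  linarith

lemma sub_div_mul_norm_sq_nonneg (p : ℕ) {q : ℕ} {z : ℂ} (hz : z ∈ ball' q) :
    0 ≤ (p : ℝ) - p / q * ‖z‖ ^ 2 := by
  rcases p.eq_zero_or_pos with rfl | hp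
  · simp
  · exact (sub_div_mul_norm_sq_pos hp hz).le

lemma norm_ofReal_sqrt_sq {a : ℝ} (ha : 0 ≤ a) : ‖((√a : ℝ) : ℂ)‖ ^ 2 = a := by
  rw [norm_real, Real.norm_of_nonneg (Real.sqrt_nonneg a), Real.sq_sqrt ha]

noncomputable def ballToEllipsoid (p q : ℕ) (z : ball' q) : ellipsoid p q :=
  ⟨((z : ℂ), (√((p : ℝ) - p / q * ‖(z : ℂ)‖ ^ 2) : ℂ)),
    (mem_ellipsoid_iff (ne_zero_of_mem_ball' z.2)).2
      (norm_ofReal_sqrt_sq (sub_div_mul_norm_sq_nonneg p z.2))⟩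

lemma ballToEllipsoid_snd_ne_zero {p q : ℕ} (hp : 0 < p) (z : ball' q) :
    (ballToEllipsoid p q z : ℂ × ℂ).2 ≠ 0 :=
  ofReal_ne_zero.2 (Real.sqrt_pos.2 (sub_div_mul_norm_sq_pos hp z.2)).ne'

lemma orbitRel_ballToEllipsoid {p q : ℕ} (hpq : p.Coprime q) {x y : ball' q}
    (h : ballRel q x y) : orbitRel p q (ballToEllipsoid p q x) (ballToEllipsoid p q y) := by
  obtain ⟨k, hk⟩ := h
  obtain ⟨u, v, huv⟩ := Nat.isCoprime_iff_coprime.2 hpq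
  have hq : (q : ℝ) ≠ 0 := Nat.cast_ne_zero.2 (ne_zero_of_mem_ball' x.2)
  have huvR : (u : ℝ) * p + v * q = 1 := by exact_mod_cast huv
  refine ⟨(k * u : ℤ) / q, Prod.ext ?_ ?_⟩
  · have : (p : ℝ) * ((k * u : ℤ) / q) = k / q + (-(k * v) : ℤ) := by
      push_cast
      field_simp
      linear_combination k * huvR
    rw [this, expc_add, expc_intCast, mul_one]
    exact hk
  · rw [mul_div_cancel₀ _ hq, expc_intCast, one_mul]
    change ((√_ : ℝ) : ℂ) = ((√_ : ℝ) : ℂ)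
    rw [hk, norm_expc_mul]

lemma exists_orbitRel_ballToEllipsoid {p q : ℕ} (hq : q ≠ 0) (x : ellipsoid p q)
    (hx : (x : ℂ × ℂ).2 ≠ 0) : ∃ z : ball' q, orbitRel p q x (ballToEllipsoid p q z) := by
  obtain ⟨⟨z, w⟩, hzw⟩ := x
  have hw : ‖w‖ ^ 2 = p - p / q * ‖z‖ ^ 2 := (mem_ellipsoid_iff hq).1 hzw
  have hz : z ∈ ball' q := by
    have hqw : 0 < (q : ℝ) * ‖w‖ ^ 2 := by
      have := norm_pos_iff.2 hx
      have : (0 : ℝ) < q := Nat.cast_pos.2 (Nat.pos_of_ne_zero hq)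
      positivity
    have hzw' : (p : ℝ) * ‖z‖ ^ 2 + q * ‖w‖ ^ 2 = p * q := hzw
    exact lt_of_mul_lt_mul_left (a := (p : ℝ)) (by linarith) (Nat.cast_nonneg p)
  set θ : ℝ := -(arg w / (2 * Real.pi)) / q
  refine ⟨⟨expc (p * θ) * z, (expc_mul_mem_ball'_iff _ _).2 hz⟩, θ, Prod.ext rfl ?_⟩
  change ((√_ : ℝ) : ℂ) = expc (q * θ) * w
  rw [norm_expc_mul, ← hw, Real.sqrt_sq (norm_nonneg w),
    mul_div_cancel₀ _ (Nat.cast_ne_zero.2 hq), expc_neg_arg_mul_self]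

lemma orbitRel.norm_snd_eq {p q : ℕ} {x y : ellipsoid p q} (h : orbitRel p q x y) :
    ‖(y : ℂ × ℂ).2‖ = ‖(x : ℂ × ℂ).2‖ := by
  obtain ⟨θ, hθ⟩ := h
  rw [hθ, norm_expc_mul]

lemma mk_mem_US_iff {p q : ℕ} (x : ellipsoid p q) :
    Quot.mk (orbitRel p q) x ∈ US p q ↔ (x : ℂ × ℂ).2 ≠ 0 := by
  refine ⟨fun ⟨y, hyx, hy⟩ => ?_, fun hx => ⟨x, rfl, hx⟩⟩
  have : ‖(y : ℂ × ℂ).2‖ = ‖(x : ℂ × ℂ).2‖ :=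
    congrArg (Quot.lift (fun x : ellipsoid p q => ‖(x : ℂ × ℂ).2‖)
      fun _ _ h => h.norm_snd_eq.symm) hyx
  rwa [← norm_ne_zero_iff, ← this, norm_ne_zero_iff]

lemma isOpen_US (p q : ℕ) : IsOpen (US p q) := by
  rw [← isQuotientMap_quot_mk.isOpen_preimage]
  have : Quot.mk (orbitRel p q) ⁻¹' US p q = {x : ellipsoid p q | (x : ℂ × ℂ).2 ≠ 0} :=
    Set.ext mk_mem_US_iff
  rw [this]
  exact isOpen_ne_fun (continuous_snd.comp continuous_subtype_val) continuous_const

noncomputable def orbitInvariant (p q : ℕ) (x : ℂ × ℂ) : ℂ :=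
  x.1 ^ q * (starRingEnd ℂ x.2 / ‖x.2‖) ^ p

lemma orbitInvariant_eq_of_orbitRel {p q : ℕ} {x y : ellipsoid p q} (h : orbitRel p q x y) :
    orbitInvariant p q y = orbitInvariant p q x := by
  obtain ⟨θ, hθ⟩ := h
  simp only [orbitInvariant, hθ, norm_expc_mul, map_mul, conj_expc, mul_pow, div_pow, expc_pow]
  have : expc (q * (p * θ)) * expc (p * -(q * θ)) = 1 := by
    rw [← expc_add, show (q : ℝ) * (p * θ) + p * -(q * θ) = (0 : ℤ) by push_cast; ring,
      expc_intCast]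
  linear_combination
    (x : ℂ × ℂ).1 ^ q * (starRingEnd ℂ (x : ℂ × ℂ).2 ^ p / ‖(x : ℂ × ℂ).2‖ ^ p) * this

lemma continuousOn_orbitInvariant (p q : ℕ) : ContinuousOn (orbitInvariant p q) {x | x.2 ≠ 0} :=
  ((continuous_fst.pow q).continuousOn).mul
    ((((continuous_conj.comp continuous_snd).continuousOn).div
      (continuous_ofReal.comp (continuous_norm.comp continuous_snd)).continuousOn
      fun _ hx => ofReal_ne_zero.2 (norm_ne_zero_iff.2 hx)).pow p)

noncomputable def usInvariant (p q : ℕ) (o : US p q) : ℂ :=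
  Quot.lift (fun x : ellipsoid p q => orbitInvariant p q x)
    (fun _ _ h => (orbitInvariant_eq_of_orbitRel h).symm) o

lemma continuous_usInvariant (p q : ℕ) : Continuous (usInvariant p q) :=
  (isQuotientMap_quot_mk.restrictPreimage_isOpen (isOpen_US p q)).continuous_iff.2 <|
    (continuousOn_orbitInvariant p q).comp_continuous
      (continuous_subtype_val.comp continuous_subtype_val) fun x => (mk_mem_US_iff _).1 x.2

lemma ballRel.pow_eq {q : ℕ} {x y : ball' q} (h : ballRel q x y) :
    (y : ℂ) ^ q = (x : ℂ) ^ q := by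
  obtain ⟨k, hk⟩ := h
  rw [hk, mul_pow, expc_div_pow_self (ne_zero_of_mem_ball' x.2), one_mul]

noncomputable def ballPow (q : ℕ) : Quot (ballRel q) → ℂ :=
  Quot.lift (fun z => (z : ℂ) ^ q) fun _ _ h => h.pow_eq.symm

lemma isOpenEmbedding_ballPow {q : ℕ} (hq : q ≠ 0) : IsOpenEmbedding (ballPow q) := by
  have : NeZero q := ⟨hq⟩
  refine .of_continuous_injective_isOpenMap
    (continuous_quot_lift _ (continuous_subtype_val.pow q)) ?_ ?_
  · rintro ⟨x⟩ ⟨y⟩ h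
    obtain ⟨k, hk⟩ := exists_expc_mul_of_pow_eq_pow hq h
    exact (Quot.sound ⟨k, hk⟩).symm
  · exact IsOpenMap.of_comp continuous_quot_mk Quot.mk_surjective <|
      (isOpenQuotientMap_pow q).isOpenMap.comp (isOpen_ball' q).isOpenMap_subtype_val

noncomputable def chartS {p q : ℕ} (hp : 0 < p) (hpq : p.Coprime q) :
    Quot (ballRel q) → US p q :=
  Quot.lift (fun z => ⟨Quot.mk _ (ballToEllipsoid p q z),
      (mk_mem_US_iff _).2 (ballToEllipsoid_snd_ne_zero hp z)⟩)
    fun _ _ h => Subtype.ext (Quot.sound (orbitRel_ballToEllipsoid hpq h))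

lemma continuous_chartS {p q : ℕ} (hp : 0 < p) (hpq : p.Coprime q) :
    Continuous (chartS hp hpq) :=
  continuous_quot_lift _ <| .subtype_mk (continuous_quot_mk.comp <| .subtype_mk
    (continuous_subtype_val.prodMk <| continuous_ofReal.comp <| Real.continuous_sqrt.comp <|
      continuous_const.sub <| continuous_const.mul <|
        (continuous_norm.comp continuous_subtype_val).pow 2) _) _

lemma surjective_chartS {p q : ℕ} (hp : 0 < p) (hq : q ≠ 0) (hpq : p.Coprime q) :
    Function.Surjective (chartS hp hpq) := by
  rintro ⟨_, x, rfl, hx⟩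
  obtain ⟨z, hz⟩ := exists_orbitRel_ballToEllipsoid hq x hx
  exact ⟨Quot.mk _ z, Subtype.ext (Quot.sound hz).symm⟩

lemma usInvariant_comp_chartS {p q : ℕ} (hp : 0 < p) (hpq : p.Coprime q) :
    usInvariant p q ∘ chartS hp hpq = ballPow q := by
  funext o
  induction o using Quot.ind with | mk z => ?_
  have hs := Real.sqrt_pos.2 (sub_div_mul_norm_sq_pos hp z.2)
  change (z : ℂ) ^ q * (starRingEnd ℂ ((√_ : ℝ) : ℂ) / ‖((√_ : ℝ) : ℂ)‖) ^ p = (z : ℂ) ^ q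
  rw [conj_ofReal, norm_real, Real.norm_of_nonneg hs.le, div_self (ofReal_ne_zero.2 hs.ne'),
    one_pow, mul_one]

/-- For `p, q` relatively prime positive integers, `Γ_{1/q}` acts on `B(q)` by complex
multiplication, and the map `B(q)/Γ_{1/q} → U_S`, `[z] ↦ [z : √(p − (p/q)|z|²)]`, is well
defined and a homeomorphism (quotient topology on the source, subspace topology from the
quotient topology on the target). -/
theorem orbisphere_chart_S (p q : ℕ) (hp : 0 < p) (hq : 0 < q) (hpq : Nat.Coprime p q) :
    (∀ z : ℂ, z ∈ ball' q → ∀ k : ℤ, expc ((k : ℝ) / (q : ℝ)) * z ∈ ball' q) ∧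
    ∃ h : Quot (ballRel q) ≃ₜ US p q,
      ∀ (z : ℂ) (hz : z ∈ ball' q) (x : ellipsoid p q),
        (x : ℂ × ℂ) =
            (z, (Real.sqrt ((p : ℝ) - (p : ℝ) / (q : ℝ) * ‖z‖ ^ 2) : ℂ)) →
          (h (Quot.mk (ballRel q) ⟨z, hz⟩) : Quot (orbitRel p q)) =
            Quot.mk (orbitRel p q) x := by
  refine ⟨fun z hz k => (expc_mul_mem_ball'_iff _ _).2 hz, ?_⟩
  have hemb := isOpenEmbedding_ballPow hq.ne'
  rw [← usInvariant_comp_chartS hp hpq] at hemb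
  have hbij : Function.Bijective (chartS hp hpq) :=
    ⟨hemb.injective.of_comp, surjective_chartS hp hq.ne' hpq⟩
  refine ⟨(Equiv.ofBijective _ hbij).toHomeomorphOfIsInducing
    (hemb.isInducing.of_comp (continuous_chartS hp hpq) (continuous_usInvariant p q)), ?_⟩
  intro z hz x hx
  exact congrArg (Quot.mk _) (Subtype.ext (a1 := ballToEllipsoid p q ⟨z, hz⟩) hx.symm)
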